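/- Let V be a real inner product space of even dimension with a unitary almost complex structure J, and let A = a₀A₀ + a₁J∘(A₀ − J∘A_J) + (c₁ − a₀)J∘A_J. Then for any unit vector X: J_X^A(X) = 0, J_X^A(JX) = c₁·JX, and J_X^A(Y) = a₀Y + a₁JY for all Y orthogonal to both X and JX. -/

import Mathlib

/-!
Since `J` is skew-adjoint, `⟪J X, X⟫ = 0` and `A_J(Y, X)X = ⟪Y, J X⟫ X`. Hence, for a unit vector `X`,
`J_X^A` is `a₀` times the projection onto `X^⊥`, plus `a₁ J` composed with the projection onto
`span{X, J X}^⊥`, plus `(c₁ - a₀)` times the projection onto `J X`; the three claims are read off.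
-/

open RealInnerProductSpace

noncomputable section

variable {V : Type*} [NormedAddCommGroup V] [InnerProductSpace ℝ V]

theorem inner_apply_left_eq_neg {J : V →ₗ[ℝ] V} (hJ2 : ∀ x : V, J (J x) = -x)
    (hJi : ∀ x y : V, ⟪J x, J y⟫ = ⟪x, y⟫) (x y : V) : ⟪J x, y⟫ = -⟪x, J y⟫ := by
  rw [← hJi, hJ2, inner_neg_left]

theorem inner_apply_self_eq_zero {J : V →ₗ[ℝ] V} (hJ2 : ∀ x : V, J (J x) = -x)
    (hJi : ∀ x y : V, ⟪J x, J y⟫ = ⟪x, y⟫) (x : V) : ⟪J x, x⟫ = 0 := by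
  have h := inner_apply_left_eq_neg hJ2 hJi x x
  rw [real_inner_comm (J x) x] at h
  linarith

def algCurv₀ (X Y Z : V) : V := ⟪Y, Z⟫ • X - ⟪X, Z⟫ • Y

def algCurvJ (J : V →ₗ[ℝ] V) (X Y Z : V) : V :=
  (1/3 : ℝ) • (⟪J Y, Z⟫ • X - ⟪J X, Z⟫ • Y - (2 : ℝ) • ⟪J X, Y⟫ • Z)

def modelCurv (J : V →ₗ[ℝ] V) (a₀ a₁ c₁ : ℝ) (X Y Z : V) : V :=
  a₀ • algCurv₀ X Y Z + a₁ • J (algCurv₀ X Y Z - J (algCurvJ J X Y Z))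
    + (c₁ - a₀) • J (algCurvJ J X Y Z)

theorem algCurvJ_apply_self_self {J : V →ₗ[ℝ] V} (hJ2 : ∀ x : V, J (J x) = -x)
    (hJi : ∀ x y : V, ⟪J x, J y⟫ = ⟪x, y⟫) (X Y : V) :
    algCurvJ J Y X X = ⟪Y, J X⟫ • X := by
  rw [algCurvJ, inner_apply_self_eq_zero hJ2 hJi, inner_apply_left_eq_neg hJ2 hJi]
  module

theorem modelCurv_apply_self_self {J : V →ₗ[ℝ] V} (hJ2 : ∀ x : V, J (J x) = -x)
    (hJi : ∀ x y : V, ⟪J x, J y⟫ = ⟪x, y⟫) (a₀ a₁ c₁ : ℝ) (X Y : V) :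
    modelCurv J a₀ a₁ c₁ Y X X =
      a₀ • (⟪X, X⟫ • Y - ⟪Y, X⟫ • X)
        + a₁ • J (⟪X, X⟫ • Y - ⟪Y, X⟫ • X - ⟪Y, J X⟫ • J X)
        + (c₁ - a₀) • ⟪Y, J X⟫ • J X := by
  rw [modelCurv, algCurvJ_apply_self_self hJ2 hJi, algCurv₀, map_smul]

theorem modelCurv_self_self_self {J : V →ₗ[ℝ] V} (hJ2 : ∀ x : V, J (J x) = -x)
    (hJi : ∀ x y : V, ⟪J x, J y⟫ = ⟪x, y⟫) (a₀ a₁ c₁ : ℝ) (X : V) :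
    modelCurv J a₀ a₁ c₁ X X X = 0 := by
  rw [modelCurv_apply_self_self hJ2 hJi, real_inner_comm (J X) X,
    inner_apply_self_eq_zero hJ2 hJi]
  simp

theorem modelCurv_apply_self_self_of_norm_eq_one {J : V →ₗ[ℝ] V}
    (hJ2 : ∀ x : V, J (J x) = -x) (hJi : ∀ x y : V, ⟪J x, J y⟫ = ⟪x, y⟫) (a₀ a₁ c₁ : ℝ)
    {X : V} (hX : ‖X‖ = 1) : modelCurv J a₀ a₁ c₁ (J X) X X = c₁ • J X := by
  have hXX : ⟪X, X⟫ = 1 := by rw [real_inner_self_eq_norm_sq, hX, one_pow]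
  rw [modelCurv_apply_self_self hJ2 hJi, hJi, hXX, inner_apply_self_eq_zero hJ2 hJi]
  simp only [one_smul, zero_smul, sub_zero, sub_self, map_zero, smul_zero, add_zero]
  module

theorem modelCurv_apply_self_self_of_orthogonal {J : V →ₗ[ℝ] V}
    (hJ2 : ∀ x : V, J (J x) = -x) (hJi : ∀ x y : V, ⟪J x, J y⟫ = ⟪x, y⟫) (a₀ a₁ c₁ : ℝ)
    {X Y : V} (hX : ‖X‖ = 1) (hXY : ⟪X, Y⟫ = 0) (hJXY : ⟪J X, Y⟫ = 0) :
    modelCurv J a₀ a₁ c₁ Y X X = a₀ • Y + a₁ • J Y := by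
  have hXX : ⟪X, X⟫ = 1 := by rw [real_inner_self_eq_norm_sq, hX, one_pow]
  rw [modelCurv_apply_self_self hJ2 hJi, hXX, real_inner_comm X Y, hXY,
    real_inner_comm (J X) Y, hJXY]
  simp

end

theorem stmt12 {V : Type*} [NormedAddCommGroup V] [InnerProductSpace ℝ V]
    (J : V →ₗ[ℝ] V)
    (hJ2 : ∀ x : V, J (J x) = -x)
    (hJi : ∀ x y : V, ⟪J x, J y⟫ = ⟪x, y⟫)
    (a₀ a₁ c₁ : ℝ)
    (A : V → V → V → V)
    (hA : ∀ X Y Z : V, A X Y Z =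
      a₀ • (⟪Y, Z⟫ • X - ⟪X, Z⟫ • Y)
      + a₁ • J ((⟪Y, Z⟫ • X - ⟪X, Z⟫ • Y)
          - J ((1/3 : ℝ) • (⟪J Y, Z⟫ • X - ⟪J X, Z⟫ • Y - (2 : ℝ) • ⟪J X, Y⟫ • Z)))
      + (c₁ - a₀) • J ((1/3 : ℝ) • (⟪J Y, Z⟫ • X - ⟪J X, Z⟫ • Y - (2 : ℝ) • ⟪J X, Y⟫ • Z)))
    (X : V) (hX : ‖X‖ = 1) :
    A X X X = 0 ∧
    A (J X) X X = c₁ • J X ∧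
    ∀ Y : V, ⟪X, Y⟫ = 0 → ⟪J X, Y⟫ = 0 → A Y X X = a₀ • Y + a₁ • J Y := by
  obtain rfl : A = modelCurv J a₀ a₁ c₁ := by
    funext X Y Z
    exact hA X Y Z
  exact ⟨modelCurv_self_self_self hJ2 hJi a₀ a₁ c₁ X,
    modelCurv_apply_self_self_of_norm_eq_one hJ2 hJi a₀ a₁ c₁ hX,
    fun _ hXY hJXY => modelCurv_apply_self_self_of_orthogonal hJ2 hJi a₀ a₁ c₁ hX hXY hJXY⟩
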